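/- Let m_sc(z) denote the Stieltjes transform of the semicircle law and z = E + iη with η > 0 and κ = min{|E-2|, |E+2|}. Then there exist universal constants c, C > 0 such that c·sqrt(κ + η) ≤ |1 - m_sc(z)^2| ≤ C·sqrt(κ + η) for all z with |E| ≤ 3, 0 < η ≤ 1. -/

import Mathlib

open Complex ComplexConjugate

/-!
Squaring `m (m + z) = -1` gives `(1 - m²)² = (z - 2)(z + 2) m²`, so
`|1 - m²| = √(|z - 2| |z + 2|) |m|`. On the region, `|z ∓ 2|` at the nearer edge is comparable to
`κ + η` and at the farther edge lies in `[2, 6]`, while `1/5 ≤ |m| ≤ 1`: the upper bound comes from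
taking imaginary parts in `m² + z m + 1 = 0` times `conj m`, the lower one from `|m| |m + z| = 1`.
-/

lemma one_sub_sq_sq_eq_of_sq_add_mul_add_one_eq_zero {R : Type*} [CommRing R] {z m : R}
    (hm : m ^ 2 + z * m + 1 = 0) : (1 - m ^ 2) ^ 2 = (z - 2) * (z + 2) * m ^ 2 := by
  linear_combination (m ^ 2 - z * m + 1) * hm

lemma norm_one_sub_sq_eq_sqrt_mul_norm {z m : ℂ} (hm : m ^ 2 + z * m + 1 = 0) :
    ‖1 - m ^ 2‖ = √(‖z - 2‖ * ‖z + 2‖) * ‖m‖ := by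
  have hsq : ‖1 - m ^ 2‖ ^ 2 = ‖z - 2‖ * ‖z + 2‖ * ‖m‖ ^ 2 := by
    rw [← norm_pow, one_sub_sq_sq_eq_of_sq_add_mul_add_one_eq_zero hm, norm_mul, norm_mul,
      norm_pow]
  rw [← Real.sqrt_sq (norm_nonneg (1 - m ^ 2)), hsq, Real.sqrt_mul (by positivity),
    Real.sqrt_sq (norm_nonneg m)]

lemma norm_le_one_of_sq_add_mul_add_one_eq_zero {z m : ℂ} (hm : m ^ 2 + z * m + 1 = 0)
    (hz : 0 ≤ z.im) (hm_im : 0 < m.im) : ‖m‖ ≤ 1 := by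
  have him : m.im * (1 - normSq m) = z.im * normSq m := by
    have := congrArg Complex.im (congrArg (· * conj m) hm)
    simp only [add_mul, one_mul, zero_mul, pow_two, add_im, mul_im, mul_re, conj_re, conj_im,
      zero_im] at this
    rw [normSq_apply]
    linear_combination -this
  have : normSq m ≤ 1 := by nlinarith [normSq_nonneg m]
  rwa [← sq_le_one_iff₀ (norm_nonneg m), Complex.sq_norm]

lemma one_le_norm_mul_one_add_norm {z m : ℂ} (hm : m ^ 2 + z * m + 1 = 0) (hm1 : ‖m‖ ≤ 1) :
    1 ≤ ‖m‖ * (1 + ‖z‖) :=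
  calc (1 : ℝ) = ‖m * (m + z)‖ := by
        rw [show m * (m + z) = -1 by linear_combination hm, norm_neg, norm_one]
    _ ≤ ‖m‖ * (‖m‖ + ‖z‖) := by rw [norm_mul]; gcongr; exact norm_add_le m z
    _ ≤ ‖m‖ * (1 + ‖z‖) := by gcongr

lemma norm_sub_two_mul_norm_add_two_comparable_of_nonneg {w : ℂ} (hre : 0 ≤ w.re)
    (hre3 : w.re ≤ 3) (him : |w.im| ≤ 1) :
    |w.re - 2| + |w.im| ≤ ‖w - 2‖ * ‖w + 2‖ ∧
      ‖w - 2‖ * ‖w + 2‖ ≤ 6 * (|w.re - 2| + |w.im|) := by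
  have hsub_lo : |w.re - 2| + |w.im| ≤ 2 * ‖w - 2‖ := by
    have h1 := abs_re_le_norm (w - 2)
    have h2 := abs_im_le_norm (w - 2)
    simp only [sub_re, sub_im, re_ofNat, im_ofNat, sub_zero] at h1 h2
    linarith
  have hsub_hi : ‖w - 2‖ ≤ |w.re - 2| + |w.im| := by
    simpa using norm_le_abs_re_add_abs_im (w - 2)
  have hadd_lo : 2 ≤ ‖w + 2‖ := by
    have := abs_re_le_norm (w + 2)
    rw [add_re, re_ofNat, abs_of_nonneg (by linarith)] at this
    linarith
  have hadd_hi : ‖w + 2‖ ≤ 6 := by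
    have := norm_le_abs_re_add_abs_im (w + 2)
    rw [add_re, add_im, re_ofNat, im_ofNat, add_zero, abs_of_nonneg (by linarith)] at this
    linarith
  constructor <;> nlinarith [norm_nonneg (w - 2), norm_nonneg (w + 2)]

lemma norm_sub_two_mul_norm_add_two_comparable {w : ℂ} (hre : |w.re| ≤ 3) (him : |w.im| ≤ 1) :
    min |w.re - 2| |w.re + 2| + |w.im| ≤ ‖w - 2‖ * ‖w + 2‖ ∧
      ‖w - 2‖ * ‖w + 2‖ ≤ 6 * (min |w.re - 2| |w.re + 2| + |w.im|) := by
  have hre' := abs_le.1 hre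
  rcases le_total 0 w.re with hpos | hneg
  · have hmin : |w.re - 2| ≤ |w.re + 2| := by
      rw [abs_of_nonneg (by linarith : 0 ≤ w.re + 2), abs_le]
      constructor <;> linarith
    rw [min_eq_left hmin]
    exact norm_sub_two_mul_norm_add_two_comparable_of_nonneg hpos hre'.2 him
  · have hmin : |w.re + 2| ≤ |w.re - 2| := by
      rw [abs_of_nonpos (by linarith : w.re - 2 ≤ 0), abs_le]
      constructor <;> linarith
    have h := norm_sub_two_mul_norm_add_two_comparable_of_nonneg (w := -w)
      (by simpa using hneg) (by simp only [neg_re]; linarith) (by simpa using him)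
    rw [show -w - 2 = -(w + 2) by ring, show -w + 2 = -(w - 2) by ring, norm_neg, norm_neg,
      mul_comm, neg_re, neg_im, abs_neg, show -w.re - 2 = -(w.re + 2) by ring, abs_neg] at h
    rwa [min_eq_right hmin]

/-- Square-root behavior of `1 - m_sc(z)²` near the spectral edges: there are universal
constants `c, C > 0` such that for all `z = E + iη` with `|E| ≤ 3`, `0 < η ≤ 1`, and
`m_sc(z)` the unique solution of `m² + z·m + 1 = 0` with `Im m > 0`,
`c·√(κ+η) ≤ |1 - m_sc(z)²| ≤ C·√(κ+η)` where `κ = min{|E-2|, |E+2|}`. -/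
theorem one_sub_msc_sq_comparable : ∃ c C : ℝ, 0 < c ∧ 0 < C ∧
    ∀ E η : ℝ, |E| ≤ 3 → 0 < η → η ≤ 1 →
    ∀ m : ℂ, m ^ 2 + (E + η * Complex.I) * m + 1 = 0 → 0 < m.im →
      c * Real.sqrt (min |E - 2| |E + 2| + η) ≤ ‖1 - m ^ 2‖ ∧
      ‖1 - m ^ 2‖ ≤ C * Real.sqrt (min |E - 2| |E + 2| + η) := by
  refine ⟨1 / 5, 3, by norm_num, by norm_num, fun E η hE hη hη1 m hm hm_im => ?_⟩
  set z : ℂ := E + η * I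
  have hz_re : z.re = E := by simp [z]
  have hz_im : z.im = η := by simp [z]
  have hm_le : ‖m‖ ≤ 1 := norm_le_one_of_sq_add_mul_add_one_eq_zero hm (hz_im ▸ hη.le) hm_im
  have hz_le : ‖z‖ ≤ 4 := by
    have := norm_le_abs_re_add_abs_im z
    rw [hz_re, hz_im, abs_of_pos hη] at this
    linarith
  have hm_ge : 1 / 5 ≤ ‖m‖ := by nlinarith [one_le_norm_mul_one_add_norm hm hm_le, norm_nonneg m]
  obtain ⟨hP_lo, hP_hi⟩ := norm_sub_two_mul_norm_add_two_comparable (w := z)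
    (hz_re ▸ hE) (by rw [hz_im, abs_of_pos hη]; exact hη1)
  rw [hz_re, hz_im, abs_of_pos hη] at hP_lo hP_hi
  rw [norm_one_sub_sq_eq_sqrt_mul_norm hm]
  constructor
  · rw [mul_comm]
    exact mul_le_mul (Real.sqrt_le_sqrt hP_lo) hm_ge (by norm_num) (Real.sqrt_nonneg _)
  · calc √(‖z - 2‖ * ‖z + 2‖) * ‖m‖ ≤ √(3 ^ 2 * (min |E - 2| |E + 2| + η)) * 1 :=
          mul_le_mul (Real.sqrt_le_sqrt (by linarith)) hm_le (norm_nonneg m) (Real.sqrt_nonneg _)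
      _ = 3 * √(min |E - 2| |E + 2| + η) := by
          rw [Real.sqrt_mul (by norm_num), Real.sqrt_sq (by norm_num), mul_one]
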